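/- For all natural numbers n and m, consider pairs (f₁, f₂) where f₁ : Fin (n+m+1) → Fin (n+1) and f₂ : Fin (n+m+1) → Fin (m+1) are monotone maps such that the map i ↦ (f₁ i, f₂ i) is injective. The assignment sending such a pair to the set { i ∈ Fin (n+m) : f₁(i+1) = f₁(i) + 1 } is a bijection from the set of such pairs to the set of subsets of Fin (n+m) of cardinality n. (Equivalently: the nondegenerate (n+m)-simplices of the product of standard simplices Δ[n] × Δ[m] correspond bijectively to (n,m)-shuffles.) -/

import Mathlib

/-!
For a nondegenerate simplex `(f₁, f₂)` of `Δ[n] × Δ[m]`, monotonicity and injectivity make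
`i ↦ f₁ i + f₂ i` a strictly increasing map from `Fin (n + m + 1)` to `{0, …, n + m}`, hence the
identity. So at each step exactly one coordinate goes up by one, and `f₁ i` is the number of
ascents of `f₁` below `i`. Conversely, a set `s` of `n` positions yields the simplex
`i ↦ (#(s below i), #(sᶜ below i))`, whose ascents are `s`.
-/

open Finset

namespace Shuffle

variable {N : ℕ}

def countBelow (s : Finset (Fin N)) (k : ℕ) : ℕ := #{j ∈ s | j.val < k}

lemma countBelow_zero (s : Finset (Fin N)) : countBelow s 0 = 0 := by simp [countBelow]

lemma countBelow_succ (s : Finset (Fin N)) (i : Fin N) :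
    countBelow s (i + 1) = countBelow s i + if i ∈ s then 1 else 0 := by
  have hsplit : {j ∈ s | j.val < i.val + 1} = {j ∈ s | j.val < i.val} ∪ {j ∈ s | j = i} := by
    ext j
    simp only [mem_union, mem_filter, ← and_or_left, Nat.lt_add_one_iff_lt_or_eq, Fin.ext_iff]
  rw [countBelow, hsplit, card_union_of_disjoint, filter_eq']
  · split_ifs <;> simp [countBelow]
  · exact disjoint_filter.2 fun j _ hj hji => by rw [hji] at hj; omega

lemma countBelow_of_le (s : Finset (Fin N)) {k : ℕ} (hk : N ≤ k) : countBelow s k = #s := by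
  rw [countBelow, filter_true_of_mem fun j _ => j.isLt.trans_le hk]

lemma countBelow_le_card (s : Finset (Fin N)) (k : ℕ) : countBelow s k ≤ #s :=
  card_le_card (filter_subset _ _)

lemma countBelow_mono (s : Finset (Fin N)) : Monotone (countBelow s) :=
  fun _ _ hkl => card_le_card (monotone_filter_right s fun _ _ hj => hj.trans_le hkl)

lemma countBelow_add_countBelow_compl (s : Finset (Fin N)) {k : ℕ} (hk : k ≤ N) :
    countBelow s k + countBelow sᶜ k = k := by
  rw [countBelow, countBelow,
    ← card_union_of_disjoint (disjoint_filter_filter disjoint_compl_right), ← filter_union,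
    union_compl, Fin.card_filter_val_lt, min_eq_right hk]

def ascents (φ : Fin (N + 1) → ℕ) : Finset (Fin N) := {i | φ i.succ = φ i.castSucc + 1}

lemma ascents_countBelow (s : Finset (Fin N)) : ascents (fun i => countBelow s i) = s := by
  ext i
  simp only [ascents, mem_filter, mem_univ, true_and, Fin.val_succ, Fin.val_castSucc,
    countBelow_succ]
  split_ifs with hi <;> simp [hi]

lemma eq_countBelow_ascents {φ : Fin (N + 1) → ℕ} (hmono : Monotone φ) (hzero : φ 0 = 0)
    (hstep : ∀ j : Fin N, φ j.succ ≤ φ j.castSucc + 1) (i : Fin (N + 1)) :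
    φ i = countBelow (ascents φ) i := by
  induction i using Fin.induction with
  | zero => rw [hzero, Fin.val_zero, countBelow_zero]
  | succ j ih =>
    have hle : φ j.castSucc ≤ φ j.succ := hmono (Fin.castSucc_le_succ j)
    rw [Fin.val_succ, countBelow_succ, ← Fin.val_castSucc, ← ih]
    have := hstep j
    split_ifs with hj <;> simp only [ascents, mem_filter, mem_univ, true_and] at hj <;> omega

lemma strictMono_val_add_val {α : Type*} [Preorder α] {p q : ℕ} {f : α → Fin p} {g : α → Fin q}
    (hf : Monotone f) (hg : Monotone g) (hinj : Function.Injective fun i => (f i, g i)) :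
    StrictMono fun i => (f i : ℕ) + g i := by
  intro a b hab
  show (f a : ℕ) + g a < f b + g b
  have hf' : (f a : ℕ) ≤ f b := hf hab.le
  have hg' : (g a : ℕ) ≤ g b := hg hab.le
  have hne : (f a : ℕ) ≠ f b ∨ (g a : ℕ) ≠ g b := by
    simpa only [ne_eq, Prod.ext_iff, Fin.ext_iff, not_and_or] using hinj.ne hab.ne
  omega

lemma eq_val_of_strictMono {k : ℕ} {φ : Fin k → ℕ} (hφ : StrictMono φ) (hlt : ∀ i, φ i < k)
    (i : Fin k) : φ i = i :=
  congrArg Fin.val (congrFun (StrictMono.eq_id (f := fun i => ⟨φ i, hlt i⟩) hφ) i)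

variable {n m : ℕ}

section Nondegenerate

variable (f₁ : Fin (n + m + 1) →o Fin (n + 1)) (f₂ : Fin (n + m + 1) →o Fin (m + 1))

lemma val_add_val_eq (hinj : Function.Injective fun i => (f₁ i, f₂ i)) (i : Fin (n + m + 1)) :
    (f₁ i : ℕ) + f₂ i = i :=
  eq_val_of_strictMono (strictMono_val_add_val f₁.monotone f₂.monotone hinj)
    (fun j => by have := (f₁ j).isLt; have := (f₂ j).isLt; omega) i

lemma val_eq_countBelow_ascents (hinj : Function.Injective fun i => (f₁ i, f₂ i))
    (i : Fin (n + m + 1)) :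
    (f₁ i : ℕ) = countBelow (ascents fun j => f₁ j) i := by
  refine eq_countBelow_ascents (fun _ _ h => f₁.monotone h) ?_ (fun j => ?_) i
  · have := val_add_val_eq f₁ f₂ hinj 0
    simp only [Fin.val_zero] at this
    omega
  · have hsucc := val_add_val_eq f₁ f₂ hinj j.succ
    have hcast := val_add_val_eq f₁ f₂ hinj j.castSucc
    have hmono : (f₂ j.castSucc : ℕ) ≤ f₂ j.succ := f₂.monotone (Fin.castSucc_le_succ j)
    rw [Fin.val_succ] at hsucc
    rw [Fin.val_castSucc] at hcast
    omega

lemma card_ascents (hinj : Function.Injective fun i => (f₁ i, f₂ i)) :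
    #(ascents fun j => f₁ j) = n := by
  have hsum := val_add_val_eq f₁ f₂ hinj (Fin.last _)
  have hcount := val_eq_countBelow_ascents f₁ f₂ hinj (Fin.last _)
  rw [Fin.val_last, countBelow_of_le _ le_rfl] at hcount
  rw [Fin.val_last] at hsum
  have := (f₁ (Fin.last _)).isLt
  have := (f₂ (Fin.last _)).isLt
  omega

end Nondegenerate

lemma eq_of_ascents_eq {f₁ g₁ : Fin (n + m + 1) →o Fin (n + 1)}
    {f₂ g₂ : Fin (n + m + 1) →o Fin (m + 1)}
    (hf : Function.Injective fun i => (f₁ i, f₂ i)) (hg : Function.Injective fun i => (g₁ i, g₂ i))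
    (h : (ascents fun j => f₁ j) = ascents fun j => g₁ j) : f₁ = g₁ ∧ f₂ = g₂ := by
  have h₁ (i) : (f₁ i : ℕ) = g₁ i := by
    rw [val_eq_countBelow_ascents f₁ f₂ hf, val_eq_countBelow_ascents g₁ g₂ hg, h]
  refine ⟨OrderHom.ext _ _ (funext fun i => Fin.ext (h₁ i)), OrderHom.ext _ _ (funext fun i => ?_)⟩
  have := val_add_val_eq f₁ f₂ hf i
  have := val_add_val_eq g₁ g₂ hg i
  exact Fin.ext (by have := h₁ i; omega)

def countBelowHom (s : Finset (Fin n)) {p : ℕ} (hp : #s ≤ p) : Fin (n + 1) →o Fin (p + 1) where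
  toFun i := ⟨countBelow s i, Nat.lt_succ_of_le ((countBelow_le_card s i).trans hp)⟩
  monotone' _ _ h := countBelow_mono s h

lemma injective_countBelowHom_prod (s : Finset (Fin n)) {p q : ℕ} (hp : #s ≤ p) (hq : #sᶜ ≤ q) :
    Function.Injective fun i => (countBelowHom s hp i, countBelowHom sᶜ hq i) := by
  intro a b hab
  have h₁ : countBelow s a = countBelow s b := congrArg (fun x => (x.1 : ℕ)) hab
  have h₂ : countBelow sᶜ a = countBelow sᶜ b := congrArg (fun x => (x.2 : ℕ)) hab
  have ha := countBelow_add_countBelow_compl s (Nat.lt_succ_iff.1 a.isLt)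
  have hb := countBelow_add_countBelow_compl s (Nat.lt_succ_iff.1 b.isLt)
  exact Fin.ext (by omega)

end Shuffle

open Shuffle in
theorem nondegenerate_simplices_equiv_shuffles (n m : ℕ) :
    Set.BijOn
      (fun p : {q : (Fin (n + m + 1) →o Fin (n + 1)) × (Fin (n + m + 1) →o Fin (m + 1)) //
          Function.Injective fun i => (q.1 i, q.2 i)} =>
        Finset.univ.filter fun i : Fin (n + m) =>
          ((p.1.1 i.succ : ℕ) = (p.1.1 i.castSucc : ℕ) + 1))
      Set.univ
      {s : Finset (Fin (n + m)) | s.card = n} := by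
  refine ⟨fun p _ => card_ascents p.1.1 p.1.2 p.2, ?_, fun s hs => ?_⟩
  · rintro ⟨⟨f₁, f₂⟩, hf⟩ - ⟨⟨g₁, g₂⟩, hg⟩ - h
    obtain ⟨rfl, rfl⟩ := eq_of_ascents_eq hf hg h
    rfl
  · have hs : #s = n := hs
    have hsc : #sᶜ = m := by rw [card_compl, Fintype.card_fin, hs, Nat.add_sub_cancel_left]
    exact ⟨⟨(countBelowHom s hs.le, countBelowHom sᶜ hsc.le),
      injective_countBelowHom_prod s hs.le hsc.le⟩, trivial, ascents_countBelow s⟩
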